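/- arXiv:1909.12711 — 3 statements merged into one kernel-verified Lean document; each statement's English description precedes it below -/
import Mathlib

section
/- Let A be a module over ℂ equipped with linear maps ∂, ∂̄ : A → A with ∂² = 0, ∂̄² = 0, ∂∂̄ + ∂̄∂ = 0, and bilinear contraction maps c_i : A → A (i ≥ 1, representing ⌟φ_i), such that for all i ≥ 1 and α ∈ A, ∂̄(c_i α) - c_i(∂̄α) = (1/2)Σ_{j=1}^{i-1} b_{j,i-j} α, where b_{j,k}α = -∂(c_j(c_k α)) - c_j(c_k ∂α) + c_j ∂(c_k α) + c_k ∂(c_j α). Suppose σ_0, σ_1, ..., σ_l ∈ A satisfy ∂̄σ_0 = 0, ∂σ_k = 0 for all 0 ≤ k ≤ l, and ∂̄σ_k = -∂(Σ_{i=1}^k c_i σ_{k-i}) for 1 ≤ k ≤ l. Then ∂̄(∂(Σ_{i=1}^{l+1} c_i σ_{l+1-i})) = 0. -/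
open Finset in
private lemma aux_reindex7 {M : Type*} [AddCommMonoid M] (n : ℕ) (g : ℕ → ℕ → M) :
    ∑ i ∈ Icc 1 n, ∑ j ∈ Icc 1 (i - 1), g j (i - j) =
    ∑ i ∈ Icc 1 n, ∑ m ∈ Icc 1 (n - i), g i m := by
  rw [Finset.sum_sigma', Finset.sum_sigma']
  apply Finset.sum_nbij' (fun p => ⟨p.2, p.1 - p.2⟩) (fun p => ⟨p.1 + p.2, p.1⟩)
  · rintro ⟨i, j⟩ h
    simp only [Finset.mem_sigma, Finset.mem_Icc] at h ⊢
    omega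
  · rintro ⟨i, m⟩ h
    simp only [Finset.mem_sigma, Finset.mem_Icc] at h ⊢
    omega
  · rintro ⟨i, j⟩ h
    simp only [Finset.mem_sigma, Finset.mem_Icc] at h
    simp only [Sigma.mk.inj_iff, heq_eq_eq]
    exact ⟨by omega, trivial⟩
  · rintro ⟨i, m⟩ h
    simp only [Finset.mem_sigma, Finset.mem_Icc] at h
    simp only [Sigma.mk.inj_iff, heq_eq_eq]
    exact ⟨trivial, by omega⟩
  · rintro ⟨i, j⟩ h
    rfl

open Finset in
private lemma aux_symm7 {M : Type*} [AddCommMonoid M] (i : ℕ) (g : ℕ → ℕ → M) :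
    ∑ j ∈ Icc 1 (i - 1), g (i - j) j = ∑ j ∈ Icc 1 (i - 1), g j (i - j) := by
  apply Finset.sum_nbij' (fun j => i - j) (fun j => i - j)
  · intro j h; simp only [Finset.mem_Icc] at h ⊢; omega
  · intro j h; simp only [Finset.mem_Icc] at h ⊢; omega
  · intro j h; simp only [Finset.mem_Icc] at h; omega
  · intro j h; simp only [Finset.mem_Icc] at h; omega
  · intro j h
    simp only [Finset.mem_Icc] at h
    have : i - (i - j) = j := by omega
    rw [this]

open Finset in
/-- Algebraic abstraction of the key inductive step in the proof of Proposition 2.1: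
given `∂² = ∂̄² = 0`, `∂∂̄ + ∂̄∂ = 0`, contraction operators `c i` (contraction with the
Kuranishi coefficients `φ_i`), brackets `b j k` (contraction with `[φ_j,φ_k]`) satisfying
the commutator formula, the integrability relation
`∂̄∘c_i - c_i∘∂̄ = (1/2)Σ_{j=1}^{i-1} b_{j,i-j}`, and elements `σ_k` with
`∂̄σ_0 = 0`, `∂σ_k = 0` for `k ≤ l`, and `∂̄σ_k = -∂(Σ_{i=1}^k c_i σ_{k-i})` for
`1 ≤ k ≤ l`, one has `∂̄(∂(Σ_{i=1}^{l+1} c_i σ_{l+1-i})) = 0`. -/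
theorem stmt7 {A : Type*} [AddCommGroup A] [Module ℂ A]
    (d db : A →ₗ[ℂ] A) (c : ℕ → A →ₗ[ℂ] A) (b : ℕ → ℕ → A →ₗ[ℂ] A)
    (hd2 : ∀ α, d (d α) = 0) (hdb2 : ∀ α, db (db α) = 0)
    (hanti : ∀ α, d (db α) + db (d α) = 0)
    (hbracket : ∀ j k α, b j k α =
      -d (c j (c k α)) - c j (c k (d α)) + c j (d (c k α)) + c k (d (c j α)))
    (hint : ∀ i α, db (c i α) - c i (db α) =
      (1 / 2 : ℂ) • ∑ j ∈ Icc 1 (i - 1), b j (i - j) α)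
    (l : ℕ) (σ : ℕ → A)
    (hσ0 : db (σ 0) = 0)
    (hclosed : ∀ k ≤ l, d (σ k) = 0)
    (hsys : ∀ k, 1 ≤ k → k ≤ l →
      db (σ k) = -d (∑ i ∈ Icc 1 k, c i (σ (k - i)))) :
    db (d (∑ i ∈ Icc 1 (l + 1), c i (σ (l + 1 - i)))) = 0 := by
  set S := ∑ i ∈ Icc 1 (l + 1), c i (σ (l + 1 - i)) with hS
  suffices h : d (db S) = 0 by
    have h2 := hanti S
    rw [h, zero_add] at h2
    exact h2
  set F : ℕ → ℕ → A := fun a m => d (c a (d (c m (σ (l + 1 - a - m))))) with hF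
  have key : ∀ i ∈ Icc 1 (l + 1), d (db (c i (σ (l + 1 - i)))) =
      -(∑ m ∈ Icc 1 (l + 1 - i), F i m)
      + (1 / 2 : ℂ) • (∑ j ∈ Icc 1 (i - 1), (F j (i - j) + F (i - j) j)) := by
    intro i hi
    simp only [Finset.mem_Icc] at hi
    have hdbci : db (c i (σ (l + 1 - i))) = c i (db (σ (l + 1 - i)))
        + (1 / 2 : ℂ) • ∑ j ∈ Icc 1 (i - 1), b j (i - j) (σ (l + 1 - i)) := by
      have h := hint i (σ (l + 1 - i))
      rw [sub_eq_iff_eq_add'] at h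
      exact h
    rw [hdbci, map_add, map_smul]
    congr 1
    · by_cases hil : i = l + 1
      · subst hil
        simp [hσ0]
      · have hk1 : 1 ≤ l + 1 - i := by omega
        have hk2 : l + 1 - i ≤ l := by omega
        rw [hsys (l + 1 - i) hk1 hk2]
        rw [map_neg, map_neg, map_sum, map_sum, map_sum]
    · congr 1
      rw [map_sum]
      apply Finset.sum_congr rfl
      intro j hj
      simp only [Finset.mem_Icc] at hj
      have hdσ : d (σ (l + 1 - i)) = 0 := hclosed _ (by omega)
      rw [hbracket]
      rw [hdσ]
      have e1 : l + 1 - j - (i - j) = l + 1 - i := by omega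
      have e2 : l + 1 - (i - j) - j = l + 1 - i := by omega
      simp only [hF, e1, e2, map_zero, map_add, map_sub, map_neg, hd2, neg_zero,
        zero_sub, sub_zero]
      abel
  have hS1 : d (db S) = ∑ i ∈ Icc 1 (l + 1), d (db (c i (σ (l + 1 - i)))) := by
    rw [hS, map_sum, map_sum]
  rw [hS1, Finset.sum_congr rfl key, Finset.sum_add_distrib, Finset.sum_neg_distrib,
    ← Finset.smul_sum]
  have hB : ∑ i ∈ Icc 1 (l + 1), ∑ j ∈ Icc 1 (i - 1), (F j (i - j) + F (i - j) j)
      = ∑ i ∈ Icc 1 (l + 1), ((∑ j ∈ Icc 1 (i - 1), F j (i - j))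
        + ∑ j ∈ Icc 1 (i - 1), F j (i - j)) := by
    apply Finset.sum_congr rfl
    intro i _
    rw [Finset.sum_add_distrib, aux_symm7]
  rw [hB]
  have h2 : (1 / 2 : ℂ) • ∑ i ∈ Icc 1 (l + 1), ((∑ j ∈ Icc 1 (i - 1), F j (i - j))
        + ∑ j ∈ Icc 1 (i - 1), F j (i - j))
      = ∑ i ∈ Icc 1 (l + 1), ∑ j ∈ Icc 1 (i - 1), F j (i - j) := by
    rw [Finset.sum_add_distrib, smul_add, ← add_smul]
    norm_num
  rw [h2, aux_reindex7]
  simp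
end

section
/- Let A^{p,q} denote a bigraded complex with anticommuting differentials ∂ : A^{p,q} → A^{p+1,q} and ∂̄ : A^{p,q} → A^{p,q+1}, ∂² = ∂̄² = ∂∂̄ + ∂̄∂ = 0. Suppose X satisfies condition E^{q,0}: for any ∂̄-closed ∂g ∈ A^{q,0}, the equation ∂̄x = ∂g has a solution. Then for any β ∈ A^{0,q-1} with ∂∂̄β = 0, one has ∂β̄ = 0, where β̄ ∈ A^{q-1,0} is the conjugate of β. -/
/-- Key step of Lemma 2.4, in the abstract bigraded setting. The relevant graded pieces
are given as separate abelian groups: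
`A0qm1 = A^{0,q-1}`, `A0q = A^{0,q}`, `A1q = A^{1,q}`, `Aqm10 = A^{q-1,0}`,
`Aq0 = A^{q,0}`, `Aq1 = A^{q,1}`, `Aqm1 = A^{q,-1}` (which vanishes: `Subsingleton`).
The maps are the components of `∂`, `∂̄` and of the conjugation (which swaps bidegrees
and intertwines `∂` and `∂̄`).  Condition `E^{q,0}` says: for any `g ∈ A^{q-1,0}` with
`∂g` being `∂̄`-closed, the equation `∂̄x = ∂g` has a solution `x ∈ A^{q,-1}`.
Conclusion: if `β ∈ A^{0,q-1}` satisfies `∂∂̄β = 0`, then `∂β̄ = 0`. -/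
theorem stmt8 {A0qm1 A0q A1q Aqm10 Aq0 Aq1 Aqm1 : Type*}
    [AddCommGroup A0qm1] [AddCommGroup A0q] [AddCommGroup A1q]
    [AddCommGroup Aqm10] [AddCommGroup Aq0] [AddCommGroup Aq1] [AddCommGroup Aqm1]
    (db0qm1 : A0qm1 →+ A0q)        -- ∂̄ : A^{0,q-1} → A^{0,q}
    (d0q : A0q →+ A1q)             -- ∂ : A^{0,q} → A^{1,q}
    (dqm10 : Aqm10 →+ Aq0)         -- ∂ : A^{q-1,0} → A^{q,0}
    (dbq0 : Aq0 →+ Aq1)            -- ∂̄ : A^{q,0} → A^{q,1}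
    (dbqm1 : Aqm1 →+ Aq0)          -- ∂̄ : A^{q,-1} → A^{q,0}
    (conjB : A0qm1 →+ Aqm10)       -- conjugation A^{0,q-1} → A^{q-1,0}
    (conjC : A0q →+ Aq0)           -- conjugation A^{0,q} → A^{q,0}
    (conjD : A1q →+ Aq1)           -- conjugation A^{1,q} → A^{q,1}
    (hconj1 : ∀ β : A0qm1, conjC (db0qm1 β) = dqm10 (conjB β))
    (hconj2 : ∀ γ : A0q, conjD (d0q γ) = dbq0 (conjC γ))
    (hvanish : Subsingleton Aqm1)  -- A^{q,-1} = 0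
    (hE : ∀ g : Aqm10, dbq0 (dqm10 g) = 0 → ∃ x : Aqm1, dbqm1 x = dqm10 g)
    (β : A0qm1) (hβ : d0q (db0qm1 β) = 0) :
    dqm10 (conjB β) = 0 := by
  have h : dbq0 (dqm10 (conjB β)) = 0 := by
    rw [← hconj1, ← hconj2, hβ, map_zero]
  obtain ⟨x, hx⟩ := hE _ h
  rw [← hx, hvanish.elim x 0, map_zero]
end

section
/- Let X be a complex manifold belonging to class E^{q,0} ∩ B^{1,q} (in the sense of the bigraded complex of forms). If γ₁ and γ₂ are two d-closed (0,q)-forms representing the same Dolbeault cohomology class in H^{0,q}(X), then γ₁ = γ₂. -/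
/-!
A difference `∂̄β` of two `∂`-closed representatives is itself `∂`-closed. Conjugating,
`∂β̄ ∈ A^{q,0}` is `∂̄`-closed, so by `E^{q,0}` it is `∂̄` of a form of bidegree `(q,-1)`,
hence zero. Conjugating back gives `∂̄β = 0`.
-/

theorem eq_zero_of_dbar_closed_of_solvable {P Q R S : Type*}
    [AddCommGroup P] [AddCommGroup Q] [AddCommGroup R] [AddCommGroup S] [Subsingleton S]
    (d : P →+ Q) (dbar : Q →+ R) (dbar' : S →+ Q)
    (hsolve : ∀ g : P, dbar (d g) = 0 → ∃ x : S, dbar' x = d g)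
    {g : P} (hg : dbar (d g) = 0) : d g = 0 := by
  obtain ⟨x, hx⟩ := hsolve g hg
  rw [← hx, Subsingleton.elim x 0, map_zero]

theorem stmt9_general {A0qm1 A0q A1q Aqm10 Aq0 Aq1 Aqm1 : Type*}
    [AddCommGroup A0qm1] [AddCommGroup A0q] [AddCommGroup A1q]
    [AddCommGroup Aqm10] [AddCommGroup Aq0] [AddCommGroup Aq1] [AddCommGroup Aqm1]
    (db0qm1 : A0qm1 →+ A0q)        -- ∂̄ : A^{0,q-1} → A^{0,q}
    (d0q : A0q →+ A1q)             -- ∂ : A^{0,q} → A^{1,q}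
    (dqm10 : Aqm10 →+ Aq0)         -- ∂ : A^{q-1,0} → A^{q,0}
    (dbq0 : Aq0 →+ Aq1)            -- ∂̄ : A^{q,0} → A^{q,1}
    (dbqm1 : Aqm1 →+ Aq0)          -- ∂̄ : A^{q,-1} → A^{q,0}
    (conjB : A0qm1 →+ Aqm10) (conjB' : Aqm10 →+ A0qm1)  -- conjugation and its inverse
    (conjC : A0q →+ Aq0) (conjC' : Aq0 →+ A0q)
    (conjD : A1q →+ Aq1)
    (hinv : ∀ β : A0qm1, conjB' (conjB β) = β)
    (hconj1 : ∀ β : A0qm1, conjC (db0qm1 β) = dqm10 (conjB β))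
    (hconj2 : ∀ γ : A0q, conjD (d0q γ) = dbq0 (conjC γ))
    (hconj3 : ∀ x : Aqm10, conjC' (dqm10 x) = db0qm1 (conjB' x))
    (hvanish : Subsingleton Aqm1)  -- A^{q,-1} = 0
    (hE : ∀ g : Aqm10, dbq0 (dqm10 g) = 0 → ∃ x : Aqm1, dbqm1 x = dqm10 g)  -- E^{q,0}
    (γ₁ γ₂ : A0q)
    (hd₁ : d0q γ₁ = 0)
    (hd₂ : d0q γ₂ = 0)
    (β : A0qm1) (hclass : γ₂ = γ₁ + db0qm1 β)  -- same Dolbeault class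
    : γ₁ = γ₂ := by
  have hd_dbar : d0q (db0qm1 β) = 0 := by
    rwa [hclass, map_add, hd₁, zero_add] at hd₂
  have hclosed : dbq0 (dqm10 (conjB β)) = 0 := by
    rw [← hconj1, ← hconj2, hd_dbar, map_zero]
  have hexact : dqm10 (conjB β) = 0 :=
    eq_zero_of_dbar_closed_of_solvable dqm10 dbq0 dbqm1 hE hclosed
  have hdbar : db0qm1 β = 0 := by
    rw [← hinv β, ← hconj3, hexact, map_zero]
  rw [hclass, hdbar, add_zero]

/-- Lemma 2.4 of the paper, in the abstract bigraded setting with conjugation.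
Graded pieces: `A0qm1 = A^{0,q-1}`, `A0q = A^{0,q}`, `A0qp1 = A^{0,q+1}`,
`A1qm1 = A^{1,q-1}`, `A1q = A^{1,q}`, `A1qp1 = A^{1,q+1}`, `Aqm10 = A^{q-1,0}`,
`Aq0 = A^{q,0}`, `Aq1 = A^{q,1}`, `Aqm1 = A^{q,-1}` (vanishing).
`X ∈ E^{q,0}`: `∂̄x = ∂g` solvable for `∂̄`-closed `∂g ∈ A^{q,0}`;
`X ∈ B^{1,q}`: `∂̄x = ∂g` has a `∂`-exact solution for `∂̄`-closed `∂g ∈ A^{1,q}`.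
If `γ₁, γ₂ ∈ A^{0,q}` are `d`-closed and represent the same Dolbeault class
(`γ₂ = γ₁ + ∂̄β`), then `γ₁ = γ₂`. -/
theorem stmt9 {A0qm1 A0q A0qp1 A1qm1 A1q A1qp1 Aqm10 Aq0 Aq1 Aqm1 : Type*}
    [AddCommGroup A0qm1] [AddCommGroup A0q] [AddCommGroup A0qp1]
    [AddCommGroup A1qm1] [AddCommGroup A1q] [AddCommGroup A1qp1]
    [AddCommGroup Aqm10] [AddCommGroup Aq0] [AddCommGroup Aq1] [AddCommGroup Aqm1]
    (db0qm1 : A0qm1 →+ A0q)        -- ∂̄ : A^{0,q-1} → A^{0,q}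
    (db0q : A0q →+ A0qp1)          -- ∂̄ : A^{0,q} → A^{0,q+1}
    (d0qm1 : A0qm1 →+ A1qm1)       -- ∂ : A^{0,q-1} → A^{1,q-1}
    (d0q : A0q →+ A1q)             -- ∂ : A^{0,q} → A^{1,q}
    (db1qm1 : A1qm1 →+ A1q)        -- ∂̄ : A^{1,q-1} → A^{1,q}
    (db1q : A1q →+ A1qp1)          -- ∂̄ : A^{1,q} → A^{1,q+1}
    (dqm10 : Aqm10 →+ Aq0)         -- ∂ : A^{q-1,0} → A^{q,0}
    (dbq0 : Aq0 →+ Aq1)            -- ∂̄ : A^{q,0} → A^{q,1}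
    (dbqm1 : Aqm1 →+ Aq0)          -- ∂̄ : A^{q,-1} → A^{q,0}
    (conjB : A0qm1 →+ Aqm10) (conjB' : Aqm10 →+ A0qm1)  -- conjugation and its inverse
    (conjC : A0q →+ Aq0) (conjC' : Aq0 →+ A0q)
    (conjD : A1q →+ Aq1)
    (hinv : ∀ β : A0qm1, conjB' (conjB β) = β)
    (hconj1 : ∀ β : A0qm1, conjC (db0qm1 β) = dqm10 (conjB β))
    (hconj2 : ∀ γ : A0q, conjD (d0q γ) = dbq0 (conjC γ))
    (hconj3 : ∀ x : Aqm10, conjC' (dqm10 x) = db0qm1 (conjB' x))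
    (hvanish : Subsingleton Aqm1)  -- A^{q,-1} = 0
    (hE : ∀ g : Aqm10, dbq0 (dqm10 g) = 0 → ∃ x : Aqm1, dbqm1 x = dqm10 g)  -- E^{q,0}
    (hB : ∀ g : A0q, db1q (d0q g) = 0 →
      ∃ y : A0qm1, db1qm1 (d0qm1 y) = d0q g)  -- B^{1,q}
    (γ₁ γ₂ : A0q)
    (hd₁ : d0q γ₁ = 0) (hdb₁ : db0q γ₁ = 0)   -- γ₁ is d-closed
    (hd₂ : d0q γ₂ = 0) (hdb₂ : db0q γ₂ = 0)   -- γ₂ is d-closed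
    (β : A0qm1) (hclass : γ₂ = γ₁ + db0qm1 β)  -- same Dolbeault class
    : γ₁ = γ₂ :=
  stmt9_general db0qm1 d0q dqm10 dbq0 dbqm1 conjB conjB' conjC conjC' conjD hinv hconj1 hconj2
    hconj3 hvanish hE γ₁ γ₂ hd₁ hd₂ β hclass
end
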